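/- arXiv:2207.07981 — 6 statements merged into one kernel-verified Lean document; each statement's English description precedes it below -/
import Mathlib

section
/- If project a is approved by the greedy-truncation layer for agent i, then every project a' with c(a') ≤ c(a) that agent i ranks at least as high as a (i.e., rank of a' ≤ rank of a) is also approved by the layer for agent i. -/
open Finset

/-- One step of the greedy-truncation layer: process one equivalence class.
State: (approved so far, cost spent so far, stopped flag). -/
def gstep (c : ℕ → ℕ) (L : ℕ) (cls : Finset ℕ) :
    Finset ℕ × ℕ × Bool → Finset ℕ × ℕ × Bool
  | (acc, spent, stopped) =>
    if stopped then (acc, spent, stopped)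
    else if spent + ∑ a ∈ cls, c a ≤ L then
      (acc ∪ cls, spent + ∑ a ∈ cls, c a, false)
    else (acc ∪ cls.filter (fun a => c a ≤ L - spent), spent, true)

/-- The greedy-truncation layer for one agent: equivalence classes are the
rank-preimages `{a ∈ A : ri a = j}` for `j = 1, …, m`, processed in order. -/
def greedyLayer (A : Finset ℕ) (c : ℕ → ℕ) (L m : ℕ) (ri : ℕ → ℕ) : Finset ℕ :=
  ((List.range m).foldl
    (fun st j => gstep c L (A.filter fun a => ri a = j + 1) st) (∅, 0, false)).1

/-- State after processing the first `j` classes. -/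
def gst (A : Finset ℕ) (c : ℕ → ℕ) (L : ℕ) (ri : ℕ → ℕ) (j : ℕ) :
    Finset ℕ × ℕ × Bool :=
  (List.range j).foldl
    (fun st k => gstep c L (A.filter fun a => ri a = k + 1) st) (∅, 0, false)

lemma gst_succ (A : Finset ℕ) (c : ℕ → ℕ) (L : ℕ) (ri : ℕ → ℕ) (j : ℕ) :
    gst A c L ri (j + 1) =
      gstep c L (A.filter fun a => ri a = j + 1) (gst A c L ri j) := by
  simp [gst, List.range_succ]

/-- The key invariant of the fold. -/
def GInv (A : Finset ℕ) (c : ℕ → ℕ) (L : ℕ) (ri : ℕ → ℕ) (j : ℕ)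
    (st : Finset ℕ × ℕ × Bool) : Prop :=
  (∀ x ∈ st.1, x ∈ A ∧ 1 ≤ ri x ∧ ri x ≤ j) ∧
  ((st.2.2 = false ∧ ∀ x ∈ A, 1 ≤ ri x → ri x ≤ j → x ∈ st.1)
   ∨ (st.2.2 = true ∧ ∃ t, 1 ≤ t ∧ t ≤ j ∧ (∀ x ∈ st.1, ri x ≤ t) ∧
       (∀ x ∈ A, 1 ≤ ri x → ri x < t → x ∈ st.1) ∧
       (∀ x ∈ A, ri x = t → (x ∈ st.1 ↔ c x ≤ L - st.2.1))))

lemma ginv_gst (A : Finset ℕ) (c : ℕ → ℕ) (L : ℕ) (ri : ℕ → ℕ) :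
    ∀ j, GInv A c L ri j (gst A c L ri j) := by
  intro j
  induction j with
  | zero =>
    constructor
    · intro x hx; simp [gst] at hx
    · left
      constructor
      · simp [gst]
      · intro x _ h1 h0; omega
  | succ j ih =>
    rw [gst_succ]
    rcases hst : gst A c L ri j with ⟨acc, spent, stopped⟩
    rw [hst] at ih
    obtain ⟨ih1, ih2⟩ := ih
    cases stopped with
    | true =>
      simp only [gstep, if_pos rfl]
      rcases ih2 with ⟨hf, _⟩ | ⟨_, t, ht1, ht2, ht3, ht4, ht5⟩
      · exact absurd hf (by simp)
      refine ⟨fun x hx => ⟨(ih1 x hx).1, (ih1 x hx).2.1, le_trans (ih1 x hx).2.2 (by omega)⟩, ?_⟩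
      exact Or.inr ⟨rfl, t, ht1, by omega, ht3, ht4, ht5⟩
    | false =>
      simp only [gstep, Bool.false_eq_true, if_false]
      rcases ih2 with ⟨_, hall⟩ | ⟨hf, _⟩
      swap
      · exact absurd hf (by simp)
      by_cases hL : spent + ∑ a ∈ A.filter (fun a => ri a = j + 1), c a ≤ L
      · rw [if_pos hL]
        constructor
        · intro x hx
          rcases Finset.mem_union.mp hx with hx | hx
          · exact ⟨(ih1 x hx).1, (ih1 x hx).2.1, le_trans (ih1 x hx).2.2 (by omega)⟩
          · obtain ⟨hxA, hxr⟩ := Finset.mem_filter.mp hx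
            exact ⟨hxA, by omega, by omega⟩
        · left
          refine ⟨rfl, fun x hxA h1 h2 => ?_⟩
          rcases Nat.lt_or_ge (ri x) (j + 1) with h | h
          · exact Finset.mem_union_left _ (hall x hxA h1 (by omega))
          · exact Finset.mem_union_right _ (Finset.mem_filter.mpr ⟨hxA, by omega⟩)
      · rw [if_neg hL]
        constructor
        · intro x hx
          rcases Finset.mem_union.mp hx with hx | hx
          · exact ⟨(ih1 x hx).1, (ih1 x hx).2.1, le_trans (ih1 x hx).2.2 (by omega)⟩
          · obtain ⟨hx', _⟩ := Finset.mem_filter.mp hx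
            obtain ⟨hxA, hxr⟩ := Finset.mem_filter.mp hx'
            exact ⟨hxA, by omega, by omega⟩
        · right
          refine ⟨rfl, j + 1, by omega, le_rfl, ?_, ?_, ?_⟩
          · intro x hx
            rcases Finset.mem_union.mp hx with hx | hx
            · exact le_trans (ih1 x hx).2.2 (by omega)
            · obtain ⟨hx', _⟩ := Finset.mem_filter.mp hx
              obtain ⟨_, hxr⟩ := Finset.mem_filter.mp hx'
              omega
          · intro x hxA h1 h2
            exact Finset.mem_union_left _ (hall x hxA h1 (by omega))
          · intro x hxA hxr
            constructor
            · intro hx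
              rcases Finset.mem_union.mp hx with hx | hx
              · have := (ih1 x hx).2.2; omega
              · exact (Finset.mem_filter.mp hx).2
            · intro hc
              exact Finset.mem_union_right _
                (Finset.mem_filter.mpr ⟨Finset.mem_filter.mpr ⟨hxA, hxr⟩, hc⟩)

/-- if `a` is approved by the greedy-truncation layer, then any
project `a'` which is at least as cheap and ranked at least as high is also
approved. -/
theorem greedyLayer_closed_under_cheaper_higher (A : Finset ℕ) (c : ℕ → ℕ)
    (L m : ℕ) (ri : ℕ → ℕ) (hr : ∀ a ∈ A, 1 ≤ ri a ∧ ri a ≤ m)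
    (a a' : ℕ) (ha' : a' ∈ A) (hrank : ri a' ≤ ri a) (hcost : c a' ≤ c a)
    (happ : a ∈ greedyLayer A c L m ri) :
    a' ∈ greedyLayer A c L m ri := by
  have hinv := ginv_gst A c L ri m
  have hgl : greedyLayer A c L m ri = (gst A c L ri m).1 := rfl
  rw [hgl] at happ ⊢
  obtain ⟨h1, h2⟩ := hinv
  have ha := h1 a happ
  have hra' := hr a' ha'
  rcases h2 with ⟨_, hall⟩ | ⟨_, t, ht1, ht2, ht3, ht4, ht5⟩
  · exact hall a' ha' hra'.1 hra'.2
  · have hat : ri a ≤ t := ht3 a happ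
    rcases Nat.lt_or_ge (ri a') t with h | h
    · exact ht4 a' ha' hra'.1 h
    · have hat' : ri a' = t := by omega
      have hae : ri a = t := by omega
      have hca : c a ≤ L - (gst A c L ri m).2.1 :=
        (ht5 a ha.1 hae).mp happ
      exact (ht5 a' ha' hat').mpr (le_trans hcost hca)
end

section
/- For any agent i, need parameter λ, and sets S ⊆ S' ⊆ A, the need-based disutility satisfies t_i(λ,S') ≤ t_i(λ,S); consequently every need-based rule D_λ satisfies inclusion maximality. -/
open Finset

/-- The need-based disutility `t_i(λ, S)` of an agent with rank function `ri`
(there being `m` projects): the least `j ∈ [m]` such that the cost of the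
projects of `S` ranked in the top `j` ranks is at least `λ`, provided
`c(S) ≥ λ`, and `m + 1` otherwise. -/
noncomputable def tdis (c : ℕ → ℕ) (m : ℕ) (ri : ℕ → ℕ) (lam : ℝ)
    (S : Finset ℕ) : ℕ :=
  if lam ≤ ∑ a ∈ S, (c a : ℝ) then
    sInf {j : ℕ | 1 ≤ j ∧ j ≤ m ∧
      lam ≤ ∑ a ∈ S.filter (fun b => ri b ≤ j), (c a : ℝ)}
  else m + 1

/-- The need-based rule `D_λ`: all feasible subsets of `A` minimizing the
total disutility. -/
def needOpt {ι : Type*} (N : Finset ι) (A : Finset ℕ) (c : ℕ → ℕ) (L m : ℕ)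
    (r : ι → ℕ → ℕ) (lam : ℝ) : Set (Finset ℕ) :=
  {S | S ⊆ A ∧ ∑ a ∈ S, c a ≤ L ∧
    ∀ T ⊆ A, ∑ a ∈ T, c a ≤ L →
      ∑ i ∈ N, tdis c m (r i) lam S ≤ ∑ i ∈ N, tdis c m (r i) lam T}

/-- for `S ⊆ S' ⊆ A` the disutility satisfies
`t_i(λ,S') ≤ t_i(λ,S)` for every agent; consequently `D_λ` satisfies inclusion
maximality: if `S` wins and `S'` is feasible then `S'` wins. -/
theorem need_disutility_antitone_and_inclusion_maximal {ι : Type*}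
    (N : Finset ι) (A : Finset ℕ) (c : ℕ → ℕ) (L m : ℕ) (r : ι → ℕ → ℕ)
    (lam : ℝ) (hlam : 0 < lam ∧ lam ≤ (L : ℝ))
    (hc : ∀ a ∈ A, 0 < c a)
    (hr : ∀ i ∈ N, ∀ a ∈ A, 1 ≤ r i a ∧ r i a ≤ m)
    (S S' : Finset ℕ) (hsub : S ⊆ S') (hS'A : S' ⊆ A) :
    (∀ i ∈ N, tdis c m (r i) lam S' ≤ tdis c m (r i) lam S) ∧
    (S ∈ needOpt N A c L m r lam → ∑ a ∈ S', c a ≤ L →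
      S' ∈ needOpt N A c L m r lam) := by

  have hSA : S ⊆ A := hsub.trans hS'A
  have key : ∀ i ∈ N, tdis c m (r i) lam S' ≤ tdis c m (r i) lam S := by
    intro i hi
    have hmem : ∀ (T : Finset ℕ), T ⊆ A → lam ≤ ∑ a ∈ T, (c a : ℝ) →
        m ∈ {j : ℕ | 1 ≤ j ∧ j ≤ m ∧
          lam ≤ ∑ a ∈ T.filter (fun b => r i b ≤ j), (c a : ℝ)} := by
      intro T hTA hT
      have hne : T.Nonempty := by
        by_contra h
        rw [Finset.not_nonempty_iff_eq_empty] at h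
        simp [h] at hT
        linarith [hlam.1]
      obtain ⟨a, ha⟩ := hne
      have hm1 : 1 ≤ m := le_trans (hr i hi a (hTA ha)).1 (hr i hi a (hTA ha)).2
      refine ⟨hm1, le_refl m, ?_⟩
      have hfil : T.filter (fun b => r i b ≤ m) = T := by
        apply Finset.filter_true_of_mem
        intro b hb; exact (hr i hi b (hTA hb)).2
      rw [hfil]; exact hT
    by_cases hS : lam ≤ ∑ a ∈ S, (c a : ℝ)
    · have hS' : lam ≤ ∑ a ∈ S', (c a : ℝ) :=
        hS.trans (Finset.sum_le_sum_of_subset_of_nonneg hsub (by intros; positivity))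
    
      rw [tdis, tdis, if_pos hS, if_pos hS']
      obtain ⟨h1, h2, h3⟩ := Nat.sInf_mem ⟨m, hmem S hSA hS⟩
      apply Nat.sInf_le
      exact ⟨h1, h2, h3.trans (Finset.sum_le_sum_of_subset_of_nonneg
        (Finset.filter_subset_filter _ hsub) (by intros; positivity))⟩
    · rw [tdis, tdis]; rw [if_neg hS]
      by_cases hS' : lam ≤ ∑ a ∈ S', (c a : ℝ)
      · rw [if_pos hS']
        have := Nat.sInf_le (hmem S' hS'A hS')
        omega
      · rw [if_neg hS']
  refine ⟨key, ?_⟩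
  rintro ⟨_, hSL, hopt⟩ hS'L
  refine ⟨hS'A, hS'L, ?_⟩
  intro T hT hTL
  calc ∑ i ∈ N, tdis c m (r i) lam S' ≤ ∑ i ∈ N, tdis c m (r i) lam S :=
        Finset.sum_le_sum key
    _ ≤ _ := hopt T hT hTL
end

section
/- The need-based rule D_λ with λ ∈ (1, L−1] fails candidate monotonicity: there exists an instance with three projects of costs L, L−1, 1 and two agents in which project a₃ wins, but after shifting a₃ one position forward in the first agent's ranking, a₃ no longer wins. -/
open Finset

/-- A project wins under `D_λ` if it is in some optimal set. -/
def needWins {ι : Type*} (N : Finset ι) (A : Finset ℕ) (c : ℕ → ℕ) (L m : ℕ)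
    (r : ι → ℕ → ℕ) (lam : ℝ) (a : ℕ) : Prop :=
  ∃ S ∈ needOpt N A c L m r lam, a ∈ S

/-- Projects `a₁ = 0`, `a₂ = 1`, `a₃ = 2` with costs `L`, `L - 1`, `1`. -/
def c9 (L : ℕ) : ℕ → ℕ := fun a => if a = 0 then L else if a = 1 then L - 1 else 1

/-- Agent 1: `a₁ ≻ a₂ ≻ a₃`; agent 2: `a₂ ≻ a₁ ≻ a₃`. -/
def r9 : Fin 2 → ℕ → ℕ := fun i a =>
  if i = 0 then (if a = 0 then 1 else if a = 1 then 2 else 3)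
  else (if a = 1 then 1 else if a = 0 then 2 else 3)

/-- After shifting `a₃` one position forward in agent 1's ranking (swapping
`a₃` with `a₂`): agent 1: `a₁ ≻ a₃ ≻ a₂`; agent 2 unchanged. -/
def r9' : Fin 2 → ℕ → ℕ := fun i a =>
  if i = 0 then (if a = 0 then 1 else if a = 2 then 2 else 3)
  else (if a = 1 then 1 else if a = 0 then 2 else 3)

lemma tdis_eq_of (c : ℕ → ℕ) (m : ℕ) (ri : ℕ → ℕ) (lam : ℝ) (S : Finset ℕ) (k : ℕ)
    (h1 : lam ≤ ∑ a ∈ S, (c a : ℝ))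
    (hk1 : 1 ≤ k) (hk2 : k ≤ m)
    (hk : lam ≤ ∑ a ∈ S.filter (fun b => ri b ≤ k), (c a : ℝ))
    (hmin : ∀ j, 1 ≤ j → j < k → ¬ lam ≤ ∑ a ∈ S.filter (fun b => ri b ≤ j), (c a : ℝ)) :
    tdis c m ri lam S = k := by
  unfold tdis
  rw [if_pos h1]
  refine le_antisymm (Nat.sInf_le ⟨hk1, hk2, hk⟩) ?_
  refine le_csInf ⟨k, hk1, hk2, hk⟩ ?_
  rintro j ⟨hj1, hj2, hj3⟩
  by_contra h
  exact hmin j hj1 (by omega) hj3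

lemma tdis_eq_of_not (c : ℕ → ℕ) (m : ℕ) (ri : ℕ → ℕ) (lam : ℝ) (S : Finset ℕ)
    (h1 : ¬ lam ≤ ∑ a ∈ S, (c a : ℝ)) : tdis c m ri lam S = m + 1 := by
  unfold tdis; rw [if_neg h1]

lemma pow012 : ({0, 1, 2} : Finset ℕ).powerset =
    {∅, {0}, {1}, {0, 1}, {2}, {0, 2}, {1, 2}, {0, 1, 2}} := by decide

section

variable (L : ℕ) (lam : ℝ)

lemma hcast (hL : 3 ≤ L) : ((L - 1 : ℕ) : ℝ) = (L : ℝ) - 1 := by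
  push_cast [Nat.cast_sub (by omega : 1 ≤ L)]; ring

-- tdis computations under r9
lemma t90_0 (hL : 3 ≤ L) (h1 : 1 < lam) (h2 : lam ≤ (L : ℝ) - 1) :
    tdis (c9 L) 3 (r9 0) lam {0} = 1 := by
  apply tdis_eq_of _ _ _ _ _ 1
  · simp [c9]; linarith
  · norm_num
  · norm_num
  · have : ({0} : Finset ℕ).filter (fun b => r9 0 b ≤ 1) = {0} := by decide
    rw [this]; simp [c9]; linarith
  · intro j hj1 hj2; omega

lemma t91_0 (hL : 3 ≤ L) (h1 : 1 < lam) (h2 : lam ≤ (L : ℝ) - 1) :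
    tdis (c9 L) 3 (r9 1) lam {0} = 2 := by
  apply tdis_eq_of _ _ _ _ _ 2
  · simp [c9]; linarith
  · norm_num
  · norm_num
  · have : ({0} : Finset ℕ).filter (fun b => r9 1 b ≤ 2) = {0} := by decide
    rw [this]; simp [c9]; linarith
  · intro j hj1 hj2
    interval_cases j
    have : ({0} : Finset ℕ).filter (fun b => r9 1 b ≤ 1) = ∅ := by decide
    rw [this]; simp; linarith

lemma t90_1 (hL : 3 ≤ L) (h1 : 1 < lam) (h2 : lam ≤ (L : ℝ) - 1) :
    tdis (c9 L) 3 (r9 0) lam {1} = 2 := by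
  have hc := hcast L hL
  apply tdis_eq_of _ _ _ _ _ 2
  · simp [c9, hc]; linarith
  · norm_num
  · norm_num
  · have : ({1} : Finset ℕ).filter (fun b => r9 0 b ≤ 2) = {1} := by decide
    rw [this]; simp [c9, hc]; linarith
  · intro j hj1 hj2
    interval_cases j
    have : ({1} : Finset ℕ).filter (fun b => r9 0 b ≤ 1) = ∅ := by decide
    rw [this]; simp; linarith

lemma t91_1 (hL : 3 ≤ L) (h1 : 1 < lam) (h2 : lam ≤ (L : ℝ) - 1) :
    tdis (c9 L) 3 (r9 1) lam {1} = 1 := by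
  have hc := hcast L hL
  apply tdis_eq_of _ _ _ _ _ 1
  · simp [c9, hc]; linarith
  · norm_num
  · norm_num
  · have : ({1} : Finset ℕ).filter (fun b => r9 1 b ≤ 1) = {1} := by decide
    rw [this]; simp [c9, hc]; linarith
  · intro j hj1 hj2; omega

lemma t90_12 (hL : 3 ≤ L) (h1 : 1 < lam) (h2 : lam ≤ (L : ℝ) - 1) :
    tdis (c9 L) 3 (r9 0) lam {1, 2} = 2 := by
  have hc := hcast L hL
  apply tdis_eq_of _ _ _ _ _ 2
  · simp [c9, hc]; linarith
  · norm_num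
  · norm_num
  · have : ({1, 2} : Finset ℕ).filter (fun b => r9 0 b ≤ 2) = {1} := by decide
    rw [this]; simp [c9, hc]; linarith
  · intro j hj1 hj2
    interval_cases j
    have : ({1, 2} : Finset ℕ).filter (fun b => r9 0 b ≤ 1) = ∅ := by decide
    rw [this]; simp; linarith

lemma t91_12 (hL : 3 ≤ L) (h1 : 1 < lam) (h2 : lam ≤ (L : ℝ) - 1) :
    tdis (c9 L) 3 (r9 1) lam {1, 2} = 1 := by
  have hc := hcast L hL
  apply tdis_eq_of _ _ _ _ _ 1
  · simp [c9, hc]; linarith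
  · norm_num
  · norm_num
  · have : ({1, 2} : Finset ℕ).filter (fun b => r9 1 b ≤ 1) = {1} := by decide
    rw [this]; simp [c9, hc]; linarith
  · intro j hj1 hj2; omega

-- sets with too small cost
lemma t_empty (h1 : 1 < lam) (ri : ℕ → ℕ) :
    tdis (c9 L) 3 ri lam ∅ = 4 := by
  apply tdis_eq_of_not; simp; linarith

lemma t_2 (h1 : 1 < lam) (ri : ℕ → ℕ) :
    tdis (c9 L) 3 ri lam {2} = 4 := by
  apply tdis_eq_of_not; simp [c9]; linarith

-- tdis computations under r9'
lemma t90'_0 (hL : 3 ≤ L) (h1 : 1 < lam) (h2 : lam ≤ (L : ℝ) - 1) :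
    tdis (c9 L) 3 (r9' 0) lam {0} = 1 := by
  apply tdis_eq_of _ _ _ _ _ 1
  · simp [c9]; linarith
  · norm_num
  · norm_num
  · have : ({0} : Finset ℕ).filter (fun b => r9' 0 b ≤ 1) = {0} := by decide
    rw [this]; simp [c9]; linarith
  · intro j hj1 hj2; omega

lemma t91'_0 (hL : 3 ≤ L) (h1 : 1 < lam) (h2 : lam ≤ (L : ℝ) - 1) :
    tdis (c9 L) 3 (r9' 1) lam {0} = 2 := by
  apply tdis_eq_of _ _ _ _ _ 2
  · simp [c9]; linarith
  · norm_num
  · norm_num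
  · have : ({0} : Finset ℕ).filter (fun b => r9' 1 b ≤ 2) = {0} := by decide
    rw [this]; simp [c9]; linarith
  · intro j hj1 hj2
    interval_cases j
    have : ({0} : Finset ℕ).filter (fun b => r9' 1 b ≤ 1) = ∅ := by decide
    rw [this]; simp; linarith

lemma t90'_1 (hL : 3 ≤ L) (h1 : 1 < lam) (h2 : lam ≤ (L : ℝ) - 1) :
    tdis (c9 L) 3 (r9' 0) lam {1} = 3 := by
  have hc := hcast L hL
  apply tdis_eq_of _ _ _ _ _ 3
  · simp [c9, hc]; linarith
  · norm_num
  · norm_num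
  · have : ({1} : Finset ℕ).filter (fun b => r9' 0 b ≤ 3) = {1} := by decide
    rw [this]; simp [c9, hc]; linarith
  · intro j hj1 hj2
    interval_cases j
    · have : ({1} : Finset ℕ).filter (fun b => r9' 0 b ≤ 1) = ∅ := by decide
      rw [this]; simp; linarith
    · have : ({1} : Finset ℕ).filter (fun b => r9' 0 b ≤ 2) = ∅ := by decide
      rw [this]; simp; linarith

lemma t91'_1 (hL : 3 ≤ L) (h1 : 1 < lam) (h2 : lam ≤ (L : ℝ) - 1) :
    tdis (c9 L) 3 (r9' 1) lam {1} = 1 := by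
  have hc := hcast L hL
  apply tdis_eq_of _ _ _ _ _ 1
  · simp [c9, hc]; linarith
  · norm_num
  · norm_num
  · have : ({1} : Finset ℕ).filter (fun b => r9' 1 b ≤ 1) = {1} := by decide
    rw [this]; simp [c9, hc]; linarith
  · intro j hj1 hj2; omega

lemma t90'_12 (hL : 3 ≤ L) (h1 : 1 < lam) (h2 : lam ≤ (L : ℝ) - 1) :
    tdis (c9 L) 3 (r9' 0) lam {1, 2} = 3 := by
  have hc := hcast L hL
  apply tdis_eq_of _ _ _ _ _ 3
  · simp [c9, hc]; linarith
  · norm_num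
  · norm_num
  · have : ({1, 2} : Finset ℕ).filter (fun b => r9' 0 b ≤ 3) = {1, 2} := by decide
    rw [this]; simp [c9, hc]; linarith
  · intro j hj1 hj2
    interval_cases j
    · have : ({1, 2} : Finset ℕ).filter (fun b => r9' 0 b ≤ 1) = ∅ := by decide
      rw [this]; simp; linarith
    · have : ({1, 2} : Finset ℕ).filter (fun b => r9' 0 b ≤ 2) = {2} := by decide
      rw [this]; simp [c9]; linarith

lemma t91'_12 (hL : 3 ≤ L) (h1 : 1 < lam) (h2 : lam ≤ (L : ℝ) - 1) :
    tdis (c9 L) 3 (r9' 1) lam {1, 2} = 1 := by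
  have hc := hcast L hL
  apply tdis_eq_of _ _ _ _ _ 1
  · simp [c9, hc]; linarith
  · norm_num
  · norm_num
  · have : ({1, 2} : Finset ℕ).filter (fun b => r9' 1 b ≤ 1) = {1} := by decide
    rw [this]; simp [c9, hc]; linarith
  · intro j hj1 hj2; omega

end

/-- `D_λ` with `λ ∈ (1, L − 1]` fails candidate monotonicity:
in this instance `a₃` wins, but after shifting `a₃` one position forward in
agent 1's ranking, `a₃` no longer wins. -/
theorem need_fails_candidate_monotonicity (L : ℕ) (hL : 3 ≤ L) (lam : ℝ)
    (hlam : 1 < lam ∧ lam ≤ (L : ℝ) - 1) :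
    needWins (univ : Finset (Fin 2)) {0, 1, 2} (c9 L) L 3 r9 lam 2 ∧
    ¬ needWins (univ : Finset (Fin 2)) {0, 1, 2} (c9 L) L 3 r9' lam 2 := by
  obtain ⟨h1, h2⟩ := hlam
  constructor
  · refine ⟨{1, 2}, ⟨by decide, ?_, ?_⟩, by decide⟩
    · simp [c9]; omega
    · intro T hT hTc
      rw [Fin.sum_univ_two, t90_12 L lam hL h1 h2, t91_12 L lam hL h1 h2]
      have hTp : T ∈ ({0, 1, 2} : Finset ℕ).powerset := Finset.mem_powerset.2 hT
      rw [pow012] at hTp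
      simp only [Finset.mem_insert, Finset.mem_singleton] at hTp
      rcases hTp with rfl | rfl | rfl | rfl | rfl | rfl | rfl | rfl
      · simp [Fin.sum_univ_two, t_empty L lam h1]
      · simp [Fin.sum_univ_two, t90_0 L lam hL h1 h2, t91_0 L lam hL h1 h2]
      · simp [Fin.sum_univ_two, t90_1 L lam hL h1 h2, t91_1 L lam hL h1 h2]
      · exfalso; simp [c9] at hTc <;> omega
      · simp [Fin.sum_univ_two, t_2 L lam h1]
      · exfalso; simp [c9] at hTc <;> omega
      · simp [Fin.sum_univ_two, t90_12 L lam hL h1 h2, t91_12 L lam hL h1 h2]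
      · exfalso; simp [c9] at hTc <;> omega
  · rintro ⟨S, ⟨hsub, hc, hmin⟩, h2S⟩
    have h0 : ∑ a ∈ ({0} : Finset ℕ), c9 L a ≤ L := by simp [c9]
    have hle := hmin {0} (by decide) h0
    simp only [Fin.sum_univ_two, t90'_0 L lam hL h1 h2, t91'_0 L lam hL h1 h2] at hle
    have hSp : S ∈ ({0, 1, 2} : Finset ℕ).powerset := Finset.mem_powerset.2 hsub
    rw [pow012] at hSp
    simp only [Finset.mem_insert, Finset.mem_singleton] at hSp
    rcases hSp with rfl | rfl | rfl | rfl | rfl | rfl | rfl | rfl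
    · simp at h2S
    · simp at h2S
    · simp at h2S
    · simp at h2S
    · simp only [Fin.sum_univ_two, t_2 L lam h1] at hle; omega
    · simp [c9] at hc <;> omega
    · simp only [Fin.sum_univ_two, t90'_12 L lam hL h1 h2, t91'_12 L lam hL h1 h2] at hle
      omega
    · simp [c9] at hc <;> omega
end

section
/- The need-based rule D_λ with λ ∈ (0,1] satisfies discount monotonicity: reducing the cost of a winning project x (of cost at least 2) by 1 leaves the disutility of every set unchanged, so x still wins. -/
open Finset

lemma lam_le_sum_iff {lam : ℝ} (h0 : 0 < lam) (h1 : lam ≤ 1)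
    {c : ℕ → ℕ} {S : Finset ℕ} (hc : ∀ a ∈ S, 1 ≤ c a) :
    (lam ≤ ∑ a ∈ S, (c a : ℝ)) ↔ S.Nonempty := by
  constructor
  · intro h
    rcases S.eq_empty_or_nonempty with rfl | hS
    · simp at h; linarith
    · exact hS
  · intro hS
    have h2 : (S.card : ℝ) ≤ ∑ a ∈ S, (c a : ℝ) := by
      calc (S.card : ℝ) = ∑ a ∈ S, (1 : ℝ) := by simp
        _ ≤ _ := Finset.sum_le_sum (fun a ha => by exact_mod_cast hc a ha)
    have h3 : (1 : ℝ) ≤ S.card := by exact_mod_cast hS.card_pos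
    linarith

lemma tdis_congr {lam : ℝ} (h0 : 0 < lam) (h1 : lam ≤ 1)
    {c c' : ℕ → ℕ} {S : Finset ℕ} (hc : ∀ a ∈ S, 1 ≤ c a)
    (hc' : ∀ a ∈ S, 1 ≤ c' a) (m : ℕ) (ri : ℕ → ℕ) :
    tdis c' m ri lam S = tdis c m ri lam S := by
  have key : ∀ T : Finset ℕ, T ⊆ S →
      ((lam ≤ ∑ a ∈ T, (c' a : ℝ)) ↔ (lam ≤ ∑ a ∈ T, (c a : ℝ))) := by
    intro T hT
    rw [lam_le_sum_iff h0 h1 (fun a ha => hc a (hT ha)),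
        lam_le_sum_iff h0 h1 (fun a ha => hc' a (hT ha))]
  unfold tdis
  by_cases hS : lam ≤ ∑ a ∈ S, (c a : ℝ)
  · rw [if_pos hS, if_pos ((key S subset_rfl).mpr hS)]
    congr 1
    ext j
    simp only [Set.mem_setOf_eq]
    exact and_congr_right fun _ => and_congr_right fun _ =>
      key _ (filter_subset _ _)
  · rw [if_neg hS, if_neg (fun h => hS ((key S subset_rfl).mp h))]

/-- the need-based rule `D_λ` with `λ ∈ (0, 1]` satisfies
discount monotonicity: reducing by `1` the cost of a winning project `x` of
cost at least `2` leaves the disutility of every set unchanged, so `x` still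
wins. -/
theorem need_discount_monotonicity {ι : Type*} (N : Finset ι) (A : Finset ℕ)
    (c c' : ℕ → ℕ) (L m : ℕ) (r : ι → ℕ → ℕ) (lam : ℝ)
    (hlam : 0 < lam ∧ lam ≤ 1) (hc : ∀ a ∈ A, 0 < c a)
    (x : ℕ) (hx : x ∈ A) (hcx : 2 ≤ c x)
    (hc' : c' = Function.update c x (c x - 1)) :
    (∀ i ∈ N, ∀ S ⊆ A, tdis c' m (r i) lam S = tdis c m (r i) lam S) ∧
    (needWins N A c L m r lam x → needWins N A c' L m r lam x) := by
  obtain ⟨h0, h1⟩ := hlam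
  have hc1 : ∀ a ∈ A, 1 ≤ c a := hc
  have hc'1 : ∀ a ∈ A, 1 ≤ c' a := by
    intro a ha
    subst hc'
    rcases eq_or_ne a x with rfl | h
    · rw [Function.update_self]; omega
    · rw [Function.update_of_ne h]; exact hc a ha
  have hle : ∀ a ∈ A, c' a ≤ c a := by
    intro a _
    subst hc'
    rcases eq_or_ne a x with rfl | h
    · rw [Function.update_self]; omega
    · rw [Function.update_of_ne h]
  have hne : ∀ a, a ≠ x → c' a = c a := by
    intro a hax
    subst hc'
    exact Function.update_of_ne hax _ _
  have hteq : ∀ S ⊆ A, ∀ i : ι,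
      tdis c' m (r i) lam S = tdis c m (r i) lam S := by
    intro S hS i
    exact tdis_congr h0 h1 (fun a ha => hc1 a (hS ha))
      (fun a ha => hc'1 a (hS ha)) m (r i)
  refine ⟨fun i _ S hS => hteq S hS i, ?_⟩
  rintro ⟨S, ⟨hSA, hSL, hSopt⟩, hxS⟩
  -- feasible sets under c'
  set F : Finset (Finset ℕ) :=
    A.powerset.filter (fun T => ∑ a ∈ T, c' a ≤ L) with hF
  have hFne : (∅ : Finset ℕ) ∈ F := by
    simp [hF]
  obtain ⟨T, hTF, hTmin⟩ :=
    F.exists_min_image (fun T => ∑ i ∈ N, tdis c m (r i) lam T) ⟨∅, hFne⟩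
  have hTA : T ⊆ A := by
    simpa [hF, Finset.mem_powerset] using (Finset.mem_filter.mp hTF).1
  have hTL : ∑ a ∈ T, c' a ≤ L := (Finset.mem_filter.mp hTF).2
  have hS'L : ∑ a ∈ S, c' a ≤ L :=
    le_trans (Finset.sum_le_sum fun a ha => hle a (hSA ha)) hSL
  have hSF : S ∈ F := by
    simp [hF, Finset.mem_powerset, hSA, hS'L]
  by_cases hxT : x ∈ T
  · refine ⟨T, ⟨hTA, hTL, ?_⟩, hxT⟩
    intro U hUA hUL
    simp only [hteq T hTA, hteq U hUA]
    exact hTmin U (by simp [hF, Finset.mem_powerset, hUA, hUL])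
  · -- T feasible under c, so S is at least as good as T
    have hTLc : ∑ a ∈ T, c a ≤ L := by
      rw [show ∑ a ∈ T, c a = ∑ a ∈ T, c' a from
        Finset.sum_congr rfl fun a ha => (hne a (fun h => hxT (h ▸ ha))).symm]
      exact hTL
    have hST : ∑ i ∈ N, tdis c m (r i) lam S ≤ ∑ i ∈ N, tdis c m (r i) lam T :=
      hSopt T hTA hTLc
    refine ⟨S, ⟨hSA, hS'L, ?_⟩, hxS⟩
    intro U hUA hUL
    simp only [hteq S hSA, hteq U hUA]
    exact le_trans hST
      (hTmin U (by simp [hF, Finset.mem_powerset, hUA, hUL]))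
end

section
/- Greedy-truncation rules with f(S)=|S| or f(S)=𝟙(|S|>0) fail discount monotonicity: in the instance with budget L > 3, projects a₁,…,a₅ of costs 2, L−1, 2, 1, L, and four agents with rankings a₁ ≻ a₂ ≻ others; a₂ ≻ a₃ ≻ others; a₄ ≻ a₅ ≻ others; a₄ ≻ a₅ ≻ others, the project a₁ wins, but after decreasing c(a₁) to 1 it no longer wins. -/
open Finset

/-- Feasible subsets of `A` maximizing `∑ i ∈ N, f (App i ∩ S)`. -/
def optSets {ι : Type*} (N : Finset ι) (A : Finset ℕ) (c : ℕ → ℕ) (L : ℕ)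
    (App : ι → Finset ℕ) (f : Finset ℕ → ℕ) : Set (Finset ℕ) :=
  {S | S ⊆ A ∧ ∑ a ∈ S, c a ≤ L ∧
    ∀ T ⊆ A, ∑ a ∈ T, c a ≤ L →
      ∑ i ∈ N, f (App i ∩ T) ≤ ∑ i ∈ N, f (App i ∩ S)}

/-- A project wins if it belongs to some optimal feasible set. -/
def winsProj {ι : Type*} (N : Finset ι) (A : Finset ℕ) (c : ℕ → ℕ) (L : ℕ)
    (App : ι → Finset ℕ) (f : Finset ℕ → ℕ) (a : ℕ) : Prop :=
  ∃ S ∈ optSets N A c L App f, a ∈ S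

/-- Projects `a₁,…,a₅ = 0,…,4` with costs `2, L-1, 2, 1, L`. -/
def c14 (L : ℕ) : ℕ → ℕ := fun a =>
  if a = 0 then 2 else if a = 1 then L - 1 else if a = 2 then 2
  else if a = 3 then 1 else L

/-- Four agents: `a₁ ≻ a₂ ≻ others`, `a₂ ≻ a₃ ≻ others`, and twice
`a₄ ≻ a₅ ≻ others` (the others tied in a last class). -/
def r14 : Fin 4 → ℕ → ℕ := fun i a =>
  if i = 0 then (if a = 0 then 1 else if a = 1 then 2 else 3)
  else if i = 1 then (if a = 1 then 1 else if a = 2 then 2 else 3)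
  else (if a = 3 then 1 else if a = 4 then 2 else 3)

lemma gstep_stop (c : ℕ → ℕ) (L : ℕ) (cls acc : Finset ℕ) (sp : ℕ) :
    gstep c L cls (acc, sp, true) = (acc, sp, true) := rfl

lemma gstep_go (c : ℕ → ℕ) (L : ℕ) (cls acc : Finset ℕ) (sp : ℕ)
    (h : sp + ∑ a ∈ cls, c a ≤ L) :
    gstep c L cls (acc, sp, false) = (acc ∪ cls, sp + ∑ a ∈ cls, c a, false) := by
  simp [gstep, h]

lemma gstep_halt (c : ℕ → ℕ) (L : ℕ) (cls acc : Finset ℕ) (sp : ℕ)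
    (h : ¬ (sp + ∑ a ∈ cls, c a ≤ L))
    (h2 : cls.filter (fun a => c a ≤ L - sp) = ∅) :
    gstep c L cls (acc, sp, false) = (acc, sp, true) := by
  simp [gstep, h, h2]

lemma c14_0 (L : ℕ) : c14 L 0 = 2 := rfl
lemma c14_1 (L : ℕ) : c14 L 1 = L - 1 := rfl
lemma c14_2 (L : ℕ) : c14 L 2 = 2 := rfl
lemma c14_3 (L : ℕ) : c14 L 3 = 1 := rfl
lemma c14_4 (L : ℕ) : c14 L 4 = L := rfl

lemma upd0 (L : ℕ) : Function.update (c14 L) 0 1 0 = 1 := by simp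
lemma upd1 (L : ℕ) : Function.update (c14 L) 0 1 1 = L - 1 := by
  rw [Function.update_of_ne (by norm_num)]; rfl
lemma upd2 (L : ℕ) : Function.update (c14 L) 0 1 2 = 2 := by
  rw [Function.update_of_ne (by norm_num)]; rfl
lemma upd3 (L : ℕ) : Function.update (c14 L) 0 1 3 = 1 := by
  rw [Function.update_of_ne (by norm_num)]; rfl
lemma upd4 (L : ℕ) : Function.update (c14 L) 0 1 4 = L := by
  rw [Function.update_of_ne (by norm_num)]; rfl

lemma lay0 (L : ℕ) (hL : 3 < L) : greedyLayer {0,1,2,3,4} (c14 L) L 5 (r14 0) = {0} := by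
  have h1 : (({0,1,2,3,4} : Finset ℕ).filter fun a => r14 0 a = 1) = {0} := by decide
  have h2 : (({0,1,2,3,4} : Finset ℕ).filter fun a => r14 0 a = 2) = {1} := by decide
  have h3 : (({0,1,2,3,4} : Finset ℕ).filter fun a => r14 0 a = 3) = {2,3,4} := by decide
  have h4 : (({0,1,2,3,4} : Finset ℕ).filter fun a => r14 0 a = 4) = ∅ := by decide
  have h5 : (({0,1,2,3,4} : Finset ℕ).filter fun a => r14 0 a = 5) = ∅ := by decide
  have s1 : ∑ a ∈ ({0} : Finset ℕ), c14 L a = 2 := by simp [c14]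
  have s2 : ∑ a ∈ ({1} : Finset ℕ), c14 L a = L - 1 := by simp [c14]
  have e1 : gstep (c14 L) L {0} (∅,0,false) = ({0},2,false) := by
    rw [gstep_go _ _ _ _ _ (by rw [s1]; omega), s1]; simp
  have e2 : gstep (c14 L) L {1} ({0},2,false) = ({0},2,true) := by
    refine gstep_halt _ _ _ _ _ (by rw [s2]; omega) ?_
    rw [Finset.filter_singleton, if_neg]
    show ¬ (c14 L 1 ≤ L - 2)
    rw [c14_1]; omega
  show (gstep _ _ _ (gstep _ _ _ (gstep _ _ _ (gstep _ _ _ (gstep _ _ _ (∅,0,false)))))).1 = {0}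
  rw [h1, h2, h3, h4, h5, e1, e2, gstep_stop, gstep_stop, gstep_stop]

lemma lay1 (L : ℕ) (hL : 3 < L) : greedyLayer {0,1,2,3,4} (c14 L) L 5 (r14 1) = {1} := by
  have h1 : (({0,1,2,3,4} : Finset ℕ).filter fun a => r14 1 a = 1) = {1} := by decide
  have h2 : (({0,1,2,3,4} : Finset ℕ).filter fun a => r14 1 a = 2) = {2} := by decide
  have h3 : (({0,1,2,3,4} : Finset ℕ).filter fun a => r14 1 a = 3) = {0,3,4} := by decide
  have h4 : (({0,1,2,3,4} : Finset ℕ).filter fun a => r14 1 a = 4) = ∅ := by decide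
  have h5 : (({0,1,2,3,4} : Finset ℕ).filter fun a => r14 1 a = 5) = ∅ := by decide
  have s1 : ∑ a ∈ ({1} : Finset ℕ), c14 L a = L - 1 := by simp [c14]
  have s2 : ∑ a ∈ ({2} : Finset ℕ), c14 L a = 2 := by simp [c14]
  have e1 : gstep (c14 L) L {1} (∅,0,false) = ({1}, L-1, false) := by
    rw [gstep_go _ _ _ _ _ (by rw [s1]; omega), s1]; simp
  have e2 : gstep (c14 L) L {2} ({1}, L-1, false) = ({1}, L-1, true) := by
    refine gstep_halt _ _ _ _ _ (by rw [s2]; omega) ?_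
    rw [Finset.filter_singleton, if_neg]
    show ¬ (c14 L 2 ≤ L - (L-1))
    rw [c14_2]; omega
  show (gstep _ _ _ (gstep _ _ _ (gstep _ _ _ (gstep _ _ _ (gstep _ _ _ (∅,0,false)))))).1 = {1}
  rw [h1, h2, h3, h4, h5, e1, e2, gstep_stop, gstep_stop, gstep_stop]

lemma lay2 (L : ℕ) (hL : 3 < L) : greedyLayer {0,1,2,3,4} (c14 L) L 5 (r14 2) = {3} := by
  have h1 : (({0,1,2,3,4} : Finset ℕ).filter fun a => r14 2 a = 1) = {3} := by decide
  have h2 : (({0,1,2,3,4} : Finset ℕ).filter fun a => r14 2 a = 2) = {4} := by decide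
  have h3 : (({0,1,2,3,4} : Finset ℕ).filter fun a => r14 2 a = 3) = {0,1,2} := by decide
  have h4 : (({0,1,2,3,4} : Finset ℕ).filter fun a => r14 2 a = 4) = ∅ := by decide
  have h5 : (({0,1,2,3,4} : Finset ℕ).filter fun a => r14 2 a = 5) = ∅ := by decide
  have s1 : ∑ a ∈ ({3} : Finset ℕ), c14 L a = 1 := by simp [c14]
  have s2 : ∑ a ∈ ({4} : Finset ℕ), c14 L a = L := by simp [c14]
  have e1 : gstep (c14 L) L {3} (∅,0,false) = ({3}, 1, false) := by
    rw [gstep_go _ _ _ _ _ (by rw [s1]; omega), s1]; simp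
  have e2 : gstep (c14 L) L {4} ({3}, 1, false) = ({3}, 1, true) := by
    refine gstep_halt _ _ _ _ _ (by rw [s2]; omega) ?_
    rw [Finset.filter_singleton, if_neg]
    show ¬ (c14 L 4 ≤ L - 1)
    rw [c14_4]; omega
  show (gstep _ _ _ (gstep _ _ _ (gstep _ _ _ (gstep _ _ _ (gstep _ _ _ (∅,0,false)))))).1 = {3}
  rw [h1, h2, h3, h4, h5, e1, e2, gstep_stop, gstep_stop, gstep_stop]

lemma lay3 (L : ℕ) (hL : 3 < L) : greedyLayer {0,1,2,3,4} (c14 L) L 5 (r14 3) = {3} := by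
  have : r14 3 = r14 2 := rfl
  rw [this]; exact lay2 L hL

lemma lay0' (L : ℕ) (hL : 3 < L) :
    greedyLayer {0,1,2,3,4} (Function.update (c14 L) 0 1) L 5 (r14 0) = {0,1} := by
  have h1 : (({0,1,2,3,4} : Finset ℕ).filter fun a => r14 0 a = 1) = {0} := by decide
  have h2 : (({0,1,2,3,4} : Finset ℕ).filter fun a => r14 0 a = 2) = {1} := by decide
  have h3 : (({0,1,2,3,4} : Finset ℕ).filter fun a => r14 0 a = 3) = {2,3,4} := by decide
  have h4 : (({0,1,2,3,4} : Finset ℕ).filter fun a => r14 0 a = 4) = ∅ := by decide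
  have h5 : (({0,1,2,3,4} : Finset ℕ).filter fun a => r14 0 a = 5) = ∅ := by decide
  have s1 : ∑ a ∈ ({0} : Finset ℕ), Function.update (c14 L) 0 1 a = 1 := by
    rw [Finset.sum_singleton, upd0]
  have s2 : ∑ a ∈ ({1} : Finset ℕ), Function.update (c14 L) 0 1 a = L - 1 := by
    rw [Finset.sum_singleton, upd1]
  have s3 : ∑ a ∈ ({2,3,4} : Finset ℕ), Function.update (c14 L) 0 1 a = 2 + (1 + L) := by
    rw [show ({2,3,4} : Finset ℕ) = insert 2 (insert 3 {4}) from rfl]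
    rw [Finset.sum_insert (by decide), Finset.sum_insert (by decide),
      Finset.sum_singleton, upd2, upd3, upd4]
  have e1 : gstep (Function.update (c14 L) 0 1) L {0} (∅,0,false) = ({0}, 1, false) := by
    rw [gstep_go _ _ _ _ _ (by rw [s1]; omega), s1]; simp
  have e2 : gstep (Function.update (c14 L) 0 1) L {1} ({0}, 1, false) = ({0,1}, 1 + (L-1), false) := by
    rw [gstep_go _ _ _ _ _ (by rw [s2]; omega), s2]
    rfl
  have e3 : gstep (Function.update (c14 L) 0 1) L {2,3,4} ({0,1}, 1 + (L-1), false)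
      = ({0,1}, 1 + (L-1), true) := by
    refine gstep_halt _ _ _ _ _ (by rw [s3]; omega) ?_
    rw [Finset.filter_eq_empty_iff]
    intro x hx
    simp only [Finset.mem_insert, Finset.mem_singleton] at hx
    rcases hx with rfl | rfl | rfl
    · rw [upd2]; omega
    · rw [upd3]; omega
    · rw [upd4]; omega
  show (gstep _ _ _ (gstep _ _ _ (gstep _ _ _ (gstep _ _ _ (gstep _ _ _ (∅,0,false)))))).1 = {0,1}
  rw [h1, h2, h3, h4, h5, e1, e2, e3, gstep_stop, gstep_stop]

lemma lay1' (L : ℕ) (hL : 3 < L) :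
    greedyLayer {0,1,2,3,4} (Function.update (c14 L) 0 1) L 5 (r14 1) = {1} := by
  have h1 : (({0,1,2,3,4} : Finset ℕ).filter fun a => r14 1 a = 1) = {1} := by decide
  have h2 : (({0,1,2,3,4} : Finset ℕ).filter fun a => r14 1 a = 2) = {2} := by decide
  have h3 : (({0,1,2,3,4} : Finset ℕ).filter fun a => r14 1 a = 3) = {0,3,4} := by decide
  have h4 : (({0,1,2,3,4} : Finset ℕ).filter fun a => r14 1 a = 4) = ∅ := by decide
  have h5 : (({0,1,2,3,4} : Finset ℕ).filter fun a => r14 1 a = 5) = ∅ := by decide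
  have s1 : ∑ a ∈ ({1} : Finset ℕ), Function.update (c14 L) 0 1 a = L - 1 := by
    rw [Finset.sum_singleton, upd1]
  have s2 : ∑ a ∈ ({2} : Finset ℕ), Function.update (c14 L) 0 1 a = 2 := by
    rw [Finset.sum_singleton, upd2]
  have e1 : gstep (Function.update (c14 L) 0 1) L {1} (∅,0,false) = ({1}, L-1, false) := by
    rw [gstep_go _ _ _ _ _ (by rw [s1]; omega), s1]; simp
  have e2 : gstep (Function.update (c14 L) 0 1) L {2} ({1}, L-1, false) = ({1}, L-1, true) := by
    refine gstep_halt _ _ _ _ _ (by rw [s2]; omega) ?_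
    rw [Finset.filter_singleton, if_neg]
    show ¬ (Function.update (c14 L) 0 1 2 ≤ L - (L-1))
    rw [upd2]; omega
  show (gstep _ _ _ (gstep _ _ _ (gstep _ _ _ (gstep _ _ _ (gstep _ _ _ (∅,0,false)))))).1 = {1}
  rw [h1, h2, h3, h4, h5, e1, e2, gstep_stop, gstep_stop, gstep_stop]

lemma lay2' (L : ℕ) (hL : 3 < L) :
    greedyLayer {0,1,2,3,4} (Function.update (c14 L) 0 1) L 5 (r14 2) = {3} := by
  have h1 : (({0,1,2,3,4} : Finset ℕ).filter fun a => r14 2 a = 1) = {3} := by decide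
  have h2 : (({0,1,2,3,4} : Finset ℕ).filter fun a => r14 2 a = 2) = {4} := by decide
  have h3 : (({0,1,2,3,4} : Finset ℕ).filter fun a => r14 2 a = 3) = {0,1,2} := by decide
  have h4 : (({0,1,2,3,4} : Finset ℕ).filter fun a => r14 2 a = 4) = ∅ := by decide
  have h5 : (({0,1,2,3,4} : Finset ℕ).filter fun a => r14 2 a = 5) = ∅ := by decide
  have s1 : ∑ a ∈ ({3} : Finset ℕ), Function.update (c14 L) 0 1 a = 1 := by
    rw [Finset.sum_singleton, upd3]
  have s2 : ∑ a ∈ ({4} : Finset ℕ), Function.update (c14 L) 0 1 a = L := by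
    rw [Finset.sum_singleton, upd4]
  have e1 : gstep (Function.update (c14 L) 0 1) L {3} (∅,0,false) = ({3}, 1, false) := by
    rw [gstep_go _ _ _ _ _ (by rw [s1]; omega), s1]; simp
  have e2 : gstep (Function.update (c14 L) 0 1) L {4} ({3}, 1, false) = ({3}, 1, true) := by
    refine gstep_halt _ _ _ _ _ (by rw [s2]; omega) ?_
    rw [Finset.filter_singleton, if_neg]
    show ¬ (Function.update (c14 L) 0 1 4 ≤ L - 1)
    rw [upd4]; omega
  show (gstep _ _ _ (gstep _ _ _ (gstep _ _ _ (gstep _ _ _ (gstep _ _ _ (∅,0,false)))))).1 = {3}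
  rw [h1, h2, h3, h4, h5, e1, e2, gstep_stop, gstep_stop, gstep_stop]

lemma lay3' (L : ℕ) (hL : 3 < L) :
    greedyLayer {0,1,2,3,4} (Function.update (c14 L) 0 1) L 5 (r14 3) = {3} := by
  have : r14 3 = r14 2 := rfl
  rw [this]; exact lay2' L hL

lemma card_singleton_inter (x : ℕ) (T : Finset ℕ) :
    (({x} : Finset ℕ) ∩ T).card = if x ∈ T then 1 else 0 := by
  by_cases h : x ∈ T <;>
    simp [Finset.singleton_inter_of_mem, Finset.singleton_inter_of_notMem, h]

lemma ne_singleton_inter (x : ℕ) (T : Finset ℕ) :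
    (if (({x} : Finset ℕ) ∩ T).Nonempty then 1 else 0) = if x ∈ T then 1 else 0 := by
  by_cases h : x ∈ T <;>
    simp [Finset.singleton_inter_of_mem, Finset.singleton_inter_of_notMem, h]

lemma card_pair_inter (S : Finset ℕ) :
    (({0,1} : Finset ℕ) ∩ S).card = (if (0:ℕ) ∈ S then 1 else 0) + (if (1:ℕ) ∈ S then 1 else 0) := by
  by_cases h0 : (0:ℕ) ∈ S <;> by_cases h1 : (1:ℕ) ∈ S <;>
    simp [Finset.insert_inter_of_mem, Finset.insert_inter_of_notMem,
      Finset.singleton_inter_of_mem, Finset.singleton_inter_of_notMem, h0, h1]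

lemma ne_pair_inter_mem (S : Finset ℕ) (h0 : (0:ℕ) ∈ S) :
    (if (({0,1} : Finset ℕ) ∩ S).Nonempty then 1 else 0) = 1 := by
  rw [if_pos]
  exact ⟨0, Finset.mem_inter.2 ⟨by decide, h0⟩⟩

lemma ne_pair_inter (S : Finset ℕ) :
    (if (({0,1} : Finset ℕ) ∩ S).Nonempty then 1 else 0)
      = if (0:ℕ) ∈ S ∨ (1:ℕ) ∈ S then 1 else 0 := by
  by_cases h0 : (0:ℕ) ∈ S <;> by_cases h1 : (1:ℕ) ∈ S <;>
    simp [Finset.insert_inter_of_mem, Finset.insert_inter_of_notMem,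
      Finset.singleton_inter_of_mem, Finset.singleton_inter_of_notMem, h0, h1]

section main
variable (L : ℕ) (hL : 3 < L)

-- cost of {0,1,3} under original costs
lemma sum013 : ∑ a ∈ ({0,1,3} : Finset ℕ), c14 L a = 2 + ((L-1) + 1) := by
  rw [show ({0,1,3} : Finset ℕ) = insert 0 (insert 1 {3}) from rfl,
    Finset.sum_insert (by decide), Finset.sum_insert (by decide),
    Finset.sum_singleton, c14_0, c14_1, c14_3]

lemma sum013' : ∑ a ∈ ({0,1,3} : Finset ℕ), Function.update (c14 L) 0 1 a = 1 + ((L-1) + 1) := by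
  rw [show ({0,1,3} : Finset ℕ) = insert 0 (insert 1 {3}) from rfl,
    Finset.sum_insert (by decide), Finset.sum_insert (by decide),
    Finset.sum_singleton, upd0, upd1, upd3]

lemma sum03 : ∑ a ∈ ({0,3} : Finset ℕ), c14 L a = 3 := by
  rw [show ({0,3} : Finset ℕ) = insert 0 {3} from rfl,
    Finset.sum_insert (by decide), Finset.sum_singleton, c14_0, c14_3]

lemma sum13' : ∑ a ∈ ({1,3} : Finset ℕ), Function.update (c14 L) 0 1 a = (L-1) + 1 := by
  rw [show ({1,3} : Finset ℕ) = insert 1 {3} from rfl,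
    Finset.sum_insert (by decide), Finset.sum_singleton, upd1, upd3]

include hL in
lemma not_all013 (T : Finset ℕ) (hTc : ∑ a ∈ T, c14 L a ≤ L) :
    ¬ ((0:ℕ) ∈ T ∧ (1:ℕ) ∈ T ∧ (3:ℕ) ∈ T) := by
  rintro ⟨h0, h1, h3⟩
  have hsub : ({0,1,3} : Finset ℕ) ⊆ T := by
    intro x hx
    simp only [Finset.mem_insert, Finset.mem_singleton] at hx
    rcases hx with rfl | rfl | rfl <;> assumption
  have hle := Finset.sum_le_sum_of_subset (f := c14 L) hsub
  rw [sum013] at hle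
  omega

include hL in
lemma not_all013' (T : Finset ℕ) (hTc : ∑ a ∈ T, Function.update (c14 L) 0 1 a ≤ L) :
    ¬ ((0:ℕ) ∈ T ∧ (1:ℕ) ∈ T ∧ (3:ℕ) ∈ T) := by
  rintro ⟨h0, h1, h3⟩
  have hsub : ({0,1,3} : Finset ℕ) ⊆ T := by
    intro x hx
    simp only [Finset.mem_insert, Finset.mem_singleton] at hx
    rcases hx with rfl | rfl | rfl <;> assumption
  have hle := Finset.sum_le_sum_of_subset (f := Function.update (c14 L) 0 1) hsub
  rw [sum013'] at hle
  omega

end main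

/-- greedy-truncation rules with `f(S) = |S|` or
`f(S) = 𝟙(|S| > 0)` fail discount monotonicity: in this instance with budget
`L > 3`, project `a₁` wins, but after decreasing `c(a₁)` from `2` to `1` it no
longer wins. -/
theorem greedy_fails_discount_monotonicity (L : ℕ) (hL : 3 < L) :
    (winsProj (univ : Finset (Fin 4)) {0, 1, 2, 3, 4} (c14 L) L
        (fun i => greedyLayer {0, 1, 2, 3, 4} (c14 L) L 5 (r14 i))
        Finset.card 0 ∧
      ¬ winsProj (univ : Finset (Fin 4)) {0, 1, 2, 3, 4}
        (Function.update (c14 L) 0 1) L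
        (fun i => greedyLayer {0, 1, 2, 3, 4}
          (Function.update (c14 L) 0 1) L 5 (r14 i)) Finset.card 0) ∧
    (winsProj (univ : Finset (Fin 4)) {0, 1, 2, 3, 4} (c14 L) L
        (fun i => greedyLayer {0, 1, 2, 3, 4} (c14 L) L 5 (r14 i))
        (fun S => if S.Nonempty then 1 else 0) 0 ∧
      ¬ winsProj (univ : Finset (Fin 4)) {0, 1, 2, 3, 4}
        (Function.update (c14 L) 0 1) L
        (fun i => greedyLayer {0, 1, 2, 3, 4}
          (Function.update (c14 L) 0 1) L 5 (r14 i))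
        (fun S => if S.Nonempty then 1 else 0) 0) := by
  refine ⟨⟨?_, ?_⟩, ?_, ?_⟩
  · -- wins with card
    refine ⟨{0,3}, ⟨by decide, ?_, ?_⟩, by decide⟩
    · rw [sum03 L]; omega
    · intro T hT hTc
      have key := not_all013 L hL T hTc
      simp only [Fin.sum_univ_four, lay0 L hL, lay1 L hL, lay2 L hL, lay3 L hL,
        _root_.card_singleton_inter]
      by_cases h0 : (0:ℕ) ∈ T
      · by_cases h1 : (1:ℕ) ∈ T
        · by_cases h3 : (3:ℕ) ∈ T
          · exact absurd ⟨h0, h1, h3⟩ key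
          · simp [h0, h1, h3]
        · by_cases h3 : (3:ℕ) ∈ T
          · simp [h0, h1, h3]
          · simp [h0, h1, h3]
      · by_cases h1 : (1:ℕ) ∈ T
        · by_cases h3 : (3:ℕ) ∈ T
          · simp [h0, h1, h3]
          · simp [h0, h1, h3]
        · by_cases h3 : (3:ℕ) ∈ T
          · simp [h0, h1, h3]
          · simp [h0, h1, h3]
  · -- fails with card after discount
    rintro ⟨S, ⟨hSA, hSc, hmax⟩, h0S⟩
    have h4le := hmax {1,3} (by decide) (by rw [sum13' L]; omega)
    simp only [Fin.sum_univ_four, lay0' L hL, lay1' L hL, lay2' L hL, lay3' L hL,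
      card_pair_inter, _root_.card_singleton_inter] at h4le
    have key := not_all013' L hL S hSc
    by_cases h1S : (1:ℕ) ∈ S
    · by_cases h3S : (3:ℕ) ∈ S
      · exact absurd ⟨h0S, h1S, h3S⟩ key
      · simp [h0S, h1S, h3S] at h4le
    · by_cases h3S : (3:ℕ) ∈ S
      · simp [h0S, h1S, h3S] at h4le
      · simp [h0S, h1S, h3S] at h4le
  · -- wins with indicator
    refine ⟨{0,3}, ⟨by decide, ?_, ?_⟩, by decide⟩
    · rw [sum03 L]; omega
    · intro T hT hTc
      have key := not_all013 L hL T hTc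
      simp only [Fin.sum_univ_four, lay0 L hL, lay1 L hL, lay2 L hL, lay3 L hL,
        ne_singleton_inter]
      by_cases h0 : (0:ℕ) ∈ T
      · by_cases h1 : (1:ℕ) ∈ T
        · by_cases h3 : (3:ℕ) ∈ T
          · exact absurd ⟨h0, h1, h3⟩ key
          · simp [h0, h1, h3]
        · by_cases h3 : (3:ℕ) ∈ T
          · simp [h0, h1, h3]
          · simp [h0, h1, h3]
      · by_cases h1 : (1:ℕ) ∈ T
        · by_cases h3 : (3:ℕ) ∈ T
          · simp [h0, h1, h3]
          · simp [h0, h1, h3]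
        · by_cases h3 : (3:ℕ) ∈ T
          · simp [h0, h1, h3]
          · simp [h0, h1, h3]
  · -- fails with indicator after discount
    rintro ⟨S, ⟨hSA, hSc, hmax⟩, h0S⟩
    have h4le := hmax {1,3} (by decide) (by rw [sum13' L]; omega)
    simp only [Fin.sum_univ_four, lay0' L hL, lay1' L hL, lay2' L hL, lay3' L hL,
      ne_pair_inter, ne_singleton_inter] at h4le
    have key := not_all013' L hL S hSc
    by_cases h1S : (1:ℕ) ∈ S
    · by_cases h3S : (3:ℕ) ∈ S
      · exact absurd ⟨h0S, h1S, h3S⟩ key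
      · simp [h0S, h1S, h3S] at h4le
    · by_cases h3S : (3:ℕ) ∈ S
      · simp [h0S, h1S, h3S] at h4le
      · simp [h0S, h1S, h3S] at h4le
end

section
/- Every need-based rule D_λ with λ ∈ (1, L] fails discount monotonicity: with two projects a₁, a₂ of costs max(2,⌈λ⌉) and L respectively, and all agents ranking a₁ above a₂, the set {a₁} is the unique winner, but after reducing c(a₁) by 1, the unique winning set is {a₂}. -/
open Finset

/-- Projects `a₁ = 0`, `a₂ = 1` with costs `max 2 ⌈λ⌉` and `L`. -/
noncomputable def c15 (L : ℕ) (lam : ℝ) : ℕ → ℕ := fun a =>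
  if a = 0 then max 2 ⌈lam⌉.toNat else L

/-!
With every agent ranking `a₁` first and `a₂` second, a funded singleton `{a}` that meets the
need `λ` gives each agent disutility equal to the rank of `a`, while a set that does not meet the
need gives `m + 1 = 3`. Since `c(a₁) + c(a₂) > L`, only `∅`, `{a₁}`, `{a₂}` are feasible. At
`c(a₁) = ⌈λ⌉` the project `a₁` meets the need alone and `{a₁}` wins with disutility `1`; after the
discount `c(a₁) = ⌈λ⌉ - 1 < λ` it no longer does, so `{a₂}` wins with disutility `2`.
-/

lemma tdis_of_sum_lt {c : ℕ → ℕ} {m : ℕ} {ri : ℕ → ℕ} {lam : ℝ} {S : Finset ℕ}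
    (h : ∑ a ∈ S, (c a : ℝ) < lam) : tdis c m ri lam S = m + 1 :=
  if_neg h.not_ge

lemma tdis_singleton {c : ℕ → ℕ} {m : ℕ} {ri : ℕ → ℕ} {lam : ℝ} {a : ℕ}
    (hlam : 0 < lam) (hc : lam ≤ c a) (h1 : 1 ≤ ri a) (hm : ri a ≤ m) :
    tdis c m ri lam {a} = ri a := by
  have hneed : ∀ j, lam ≤ ∑ b ∈ ({a} : Finset ℕ).filter (fun b => ri b ≤ j), (c b : ℝ) ↔
      ri a ≤ j := by
    intro j
    rw [Finset.filter_singleton]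
    split_ifs with h <;> simp [h, hc, hlam.not_ge]
  rw [tdis, if_pos (by simpa using hc)]
  simp only [hneed]
  exact le_antisymm (Nat.sInf_le ⟨h1, hm, le_rfl⟩)
    (le_csInf ⟨ri a, h1, hm, le_rfl⟩ fun j hj => hj.2.2)

lemma needOpt_eq_singleton_of_forall_tdis_lt {ι : Type*} {N : Finset ι} (hN : N.Nonempty)
    {A : Finset ℕ} {c : ℕ → ℕ} {L m : ℕ} {r : ι → ℕ → ℕ} {lam : ℝ} {S : Finset ℕ}
    (hSA : S ⊆ A) (hSL : ∑ a ∈ S, c a ≤ L)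
    (hlt : ∀ T ⊆ A, ∑ a ∈ T, c a ≤ L → T ≠ S →
      ∀ i ∈ N, tdis c m (r i) lam S < tdis c m (r i) lam T) :
    needOpt N A c L m r lam = {S} := by
  ext T
  simp only [needOpt, Set.mem_ofPred_eq, Set.mem_singleton_iff]
  constructor
  · rintro ⟨hTA, hTL, hopt⟩
    by_contra hne
    exact (hopt S hSA hSL).not_gt (sum_lt_sum_of_nonempty hN (hlt T hTA hTL hne))
  · rintro rfl
    refine ⟨hSA, hSL, fun U hUA hUL => ?_⟩
    rcases eq_or_ne U T with rfl | hne
    · exact le_rfl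
    · exact (sum_lt_sum_of_nonempty hN (hlt U hUA hUL hne)).le

lemma eq_empty_or_singleton_of_subset_pair {c : ℕ → ℕ} {L : ℕ} {T : Finset ℕ}
    (hT : T ⊆ {0, 1}) (hTL : ∑ a ∈ T, c a ≤ L) (hL : L < c 0 + c 1) :
    T = ∅ ∨ T = {0} ∨ T = {1} := by
  have hpow : ({0, 1} : Finset ℕ).powerset = {∅, {0}, {1}, {0, 1}} := by decide
  have hT' := Finset.mem_powerset.2 hT
  rw [hpow] at hT'
  simp only [Finset.mem_insert, Finset.mem_singleton] at hT'
  rcases hT' with h | h | h | rfl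
  · exact Or.inl h
  · exact Or.inr (Or.inl h)
  · exact Or.inr (Or.inr h)
  · rw [Finset.sum_pair zero_ne_one] at hTL
    omega

section TwoProjects

variable {ι : Type*} {N : Finset ι} {c : ℕ → ℕ} {L : ℕ} {r : ι → ℕ → ℕ} {lam : ℝ}

lemma needOpt_pair_eq_singleton_zero (hN : N.Nonempty)
    (hr : ∀ i ∈ N, r i 0 = 1 ∧ r i 1 = 2) (hlam : 0 < lam)
    (h0 : lam ≤ c 0) (h1 : lam ≤ c 1) (h0L : c 0 ≤ L) (hL : L < c 0 + c 1) :
    needOpt N {0, 1} c L 2 r lam = {{0}} := by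
  refine needOpt_eq_singleton_of_forall_tdis_lt hN (by simp) (by simpa using h0L) ?_
  intro T hT hTL hne i hi
  obtain ⟨hr0, hr1⟩ := hr i hi
  rw [tdis_singleton hlam h0 (by omega) (by omega), hr0]
  rcases eq_empty_or_singleton_of_subset_pair hT hTL hL with rfl | rfl | rfl
  · rw [tdis_of_sum_lt (by simpa using hlam)]
    omega
  · exact absurd rfl hne
  · rw [tdis_singleton hlam h1 (by omega) (by omega)]
    omega

lemma needOpt_pair_eq_singleton_one (hN : N.Nonempty) (hr : ∀ i ∈ N, r i 1 = 2)
    (h0 : (c 0 : ℝ) < lam) (h1 : lam ≤ c 1) (h1L : c 1 ≤ L) (hL : L < c 0 + c 1) :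
    needOpt N {0, 1} c L 2 r lam = {{1}} := by
  have hlam : 0 < lam := (Nat.cast_nonneg _).trans_lt h0
  refine needOpt_eq_singleton_of_forall_tdis_lt hN (by simp) (by simpa using h1L) ?_
  intro T hT hTL hne i hi
  have hr1 := hr i hi
  rw [tdis_singleton hlam h1 (by omega) (by omega), hr1]
  rcases eq_empty_or_singleton_of_subset_pair hT hTL hL with rfl | rfl | rfl
  · rw [tdis_of_sum_lt (by simpa using hlam)]
    omega
  · rw [tdis_of_sum_lt (by simpa using h0)]
    omega
  · exact absurd rfl hne

end TwoProjects

lemma c15_zero_eq_ceil {L : ℕ} {lam : ℝ} (hlam : 1 < lam) : (c15 L lam 0 : ℤ) = ⌈lam⌉ := by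
  have h1 : (1 : ℤ) < ⌈lam⌉ := Int.lt_ceil.2 (by exact_mod_cast hlam)
  simp only [c15, ↓reduceIte, Nat.cast_max]
  omega

/-- every need-based rule `D_λ` with `λ ∈ (1, L]` fails discount
monotonicity: with projects `a₁, a₂` of costs `max 2 ⌈λ⌉` and `L` and all
agents ranking `a₁` above `a₂`, the set `{a₁}` is the unique winning set, but
after reducing `c(a₁)` by `1` the unique winning set is `{a₂}`. -/
theorem need_fails_discount_monotonicity {ι : Type*} (N : Finset ι)
    (hN : N.Nonempty) (L : ℕ) (lam : ℝ) (hlam : 1 < lam ∧ lam ≤ (L : ℝ))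
    (r : ι → ℕ → ℕ) (hr : ∀ i ∈ N, r i 0 = 1 ∧ r i 1 = 2) :
    needOpt N {0, 1} (c15 L lam) L 2 r lam = {({0} : Finset ℕ)} ∧
    needOpt N {0, 1}
        (Function.update (c15 L lam) 0 (c15 L lam 0 - 1)) L 2 r lam
      = {({1} : Finset ℕ)} := by
  obtain ⟨hl1, hlL⟩ := hlam
  have hceil := c15_zero_eq_ceil (L := L) hl1
  have hc0two : 2 ≤ c15 L lam 0 := le_max_left _ _
  have hceilL : ⌈lam⌉ ≤ L := Int.ceil_le.2 hlL
  have hc0 : lam ≤ c15 L lam 0 := by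
    rw [← Int.cast_natCast, hceil]
    exact Int.le_ceil lam
  have hc0' : ((c15 L lam 0 - 1 : ℕ) : ℝ) < lam := by
    rw [Nat.cast_sub (by omega), ← Int.cast_natCast, hceil, Nat.cast_one]
    linarith [Int.ceil_lt_add_one lam]
  have hc1 : c15 L lam 1 = L := rfl
  have hd0 : Function.update (c15 L lam) 0 (c15 L lam 0 - 1) 0 = c15 L lam 0 - 1 :=
    Function.update_self _ _ _
  have hd1 : Function.update (c15 L lam) 0 (c15 L lam 0 - 1) 1 = L :=
    Function.update_of_ne one_ne_zero _ _
  exact ⟨needOpt_pair_eq_singleton_zero hN hr (by linarith) hc0 (hc1 ▸ hlL) (by omega)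
      (by omega),
    needOpt_pair_eq_singleton_one hN (fun i hi => (hr i hi).2) (hd0 ▸ hc0') (hd1 ▸ hlL)
      hd1.le (by omega)⟩
end
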